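/- Let n, d, m be positive integers, let ε > 0 and 0 < δ ≤ 1, and let E : {0,1}^{n} × {0,1}^{d} → {0,1}^{m} be a (k, ε)-extractor with k = n − log₂(1/δ) − 1. Then E is an (ε, δ)-averaging sampler: for every f : {0,1}^{m} → [0,1], the fraction of x ∈ {0,1}^{n} for which |E_{s∈{0,1}^{d}}[f(E(x,s))] − E_{y∈{0,1}^{m}}[f(y)]| > ε is less than δ. -/
import Mathlib


/-- `P` is a (finitely supported) probability distribution on the finite type `T`. -/
def IsProb {T : Type*} [Fintype T] (P : T → ℝ) : Prop :=
  (∀ t, 0 ≤ P t) ∧ ∑ t, P t = 1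

/-- Statistical (total variation) distance `(1/2)·Σ_t |P t − Q t|`. -/
noncomputable def statDist {T : Type*} [Fintype T] (P Q : T → ℝ) : ℝ :=
  (∑ t, |P t - Q t|) / 2

/-- `P` has min-entropy at least `k`: every point has probability at most `2^{−k}`. -/
noncomputable def MinEntropyGe {T : Type*} [Fintype T] (P : T → ℝ) (k : ℝ) : Prop :=
  ∀ t, P t ≤ (2 : ℝ) ^ (-k)

/-- The pushforward of `P` along `f`. -/
noncomputable def pushf {A B : Type*} [Fintype A] [DecidableEq B] (P : A → ℝ) (f : A → B) :
    B → ℝ :=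
  fun b => ∑ a, if f a = b then P a else 0

/-- `E : {0,1}^n × {0,1}^d → {0,1}^m` is a `(k, ε)`-extractor: for every `k`-source `X`
on `{0,1}^n`, the distribution `E(X, U_d)` is `ε`-close to uniform on `{0,1}^m`. -/
noncomputable def IsExtractor {n d m : ℕ} (k ε : ℝ)
    (E : (Fin n → Bool) → (Fin d → Bool) → (Fin m → Bool)) : Prop :=
  ∀ P : (Fin n → Bool) → ℝ, IsProb P → MinEntropyGe P k →
    statDist
      (pushf (fun q : (Fin n → Bool) × (Fin d → Bool) =>
          P q.1 / (Fintype.card (Fin d → Bool) : ℝ))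
        (fun q => E q.1 q.2))
      (fun _ => 1 / (Fintype.card (Fin m → Bool) : ℝ)) ≤ ε

/-- `(P₁, P₂)` jointly form a `(k₁, k₂)`-block source: the first marginal has min-entropy
at least `k₁`, and every conditional distribution of the second coordinate given a
first coordinate in the support has min-entropy at least `k₂`. -/
noncomputable def IsBlockSource {A B : Type*} [Fintype A] [Fintype B] (k₁ k₂ : ℝ)
    (P : A × B → ℝ) : Prop :=
  (∀ a, (∑ b, P (a, b)) ≤ (2 : ℝ) ^ (-k₁)) ∧
  (∀ a, 0 < (∑ b, P (a, b)) → ∀ b, P (a, b) / (∑ b', P (a, b')) ≤ (2 : ℝ) ^ (-k₂))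

/-- The uniform average `E_{t∈T}[f t]` over a finite type `T`. -/
noncomputable def expectation {T : Type*} [Fintype T] (f : T → ℝ) : ℝ :=
  (∑ t, f t) / (Fintype.card T : ℝ)

section Aux

lemma sum_pushf_mul {A B : Type*} [Fintype A] [Fintype B] [DecidableEq B]
    (P : A → ℝ) (g : A → B) (f : B → ℝ) :
    ∑ b, pushf P g b * f b = ∑ a, P a * f (g a) := by
  unfold pushf
  simp only [Finset.sum_mul, ite_mul, zero_mul]
  rw [Finset.sum_comm]
  simp [Finset.sum_ite_eq]

lemma abs_sub_sum_le_statDist {T : Type*} [Fintype T] (P Q f : T → ℝ)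
    (hPQ : ∑ t, P t = ∑ t, Q t) (hf : ∀ t, 0 ≤ f t ∧ f t ≤ 1) :
    |∑ t, P t * f t - ∑ t, Q t * f t| ≤ statDist P Q := by
  have h1 : ∑ t, P t * f t - ∑ t, Q t * f t = ∑ t, (P t - Q t) * (f t - 1/2) := by
    have h2 : ∑ t, (P t - Q t) * (f t - 1/2)
        = ∑ t, (P t * f t - Q t * f t - P t * (1/2) + Q t * (1/2)) :=
      Finset.sum_congr rfl (fun t _ => by ring)
    rw [h2]
    simp only [Finset.sum_add_distrib, Finset.sum_sub_distrib, ← Finset.sum_mul, hPQ]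
    ring
  rw [h1, statDist]
  calc |∑ t, (P t - Q t) * (f t - 1/2)| ≤ ∑ t, |(P t - Q t) * (f t - 1/2)| :=
        Finset.abs_sum_le_sum_abs _ _
    _ ≤ ∑ t, |P t - Q t| * (1/2) := by
        apply Finset.sum_le_sum; intro t _
        rw [abs_mul]
        have h3 : |f t - 1/2| ≤ 1/2 :=
          abs_le.mpr ⟨by linarith [(hf t).1], by linarith [(hf t).2]⟩
        exact mul_le_mul_of_nonneg_left h3 (abs_nonneg _)
    _ = (∑ t, |P t - Q t|) / 2 := by rw [← Finset.sum_mul]; ring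

lemma expectation_one_sub {T : Type*} [Fintype T] [Nonempty T] (g : T → ℝ) :
    expectation (fun t => 1 - g t) = 1 - expectation g := by
  have h : (Fintype.card T : ℝ) ≠ 0 := Nat.cast_ne_zero.mpr Fintype.card_ne_zero
  rw [expectation, expectation, Finset.sum_sub_distrib, Finset.sum_const, Finset.card_univ,
      nsmul_eq_mul, mul_one, sub_div, div_self h]

lemma key_half (n d m : ℕ) (ε δ : ℝ) (hε : 0 < ε) (hδ0 : 0 < δ)
    (E : (Fin n → Bool) → (Fin d → Bool) → (Fin m → Bool))
    (hE : IsExtractor ((n : ℝ) - Real.logb 2 (1 / δ) - 1) ε E)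
    (f : (Fin m → Bool) → ℝ) (hf : ∀ y, f y ∈ Set.Icc (0 : ℝ) 1) :
    ((Finset.univ.filter fun x : Fin n → Bool =>
        ε < expectation (fun s => f (E x s)) - expectation f).card : ℝ)
      < δ * (Fintype.card (Fin n → Bool) : ℝ) / 2 := by
  by_contra hc
  push_neg at hc
  set S := Finset.univ.filter fun x : Fin n → Bool =>
      ε < expectation (fun s => f (E x s)) - expectation f with hS
  have hf' : ∀ y, 0 ≤ f y ∧ f y ≤ 1 := fun y => Set.mem_Icc.mp (hf y)
  have hNn : (Fintype.card (Fin n → Bool) : ℝ) = 2 ^ n := by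
    simp [Fintype.card_fun]
  rw [hNn] at hc
  have h2n : (0:ℝ) < 2 ^ n := by positivity
  have hSpos : (0:ℝ) < (S.card : ℝ) := lt_of_lt_of_le (by positivity) hc
  have hSne : S.Nonempty := Finset.card_pos.mp (Nat.cast_pos.mp hSpos)
  set P : (Fin n → Bool) → ℝ := fun x => if x ∈ S then ((S.card : ℝ))⁻¹ else 0 with hP
  have hPS : ∑ x ∈ S, P x = 1 := by
    have h : ∀ x ∈ S, P x = ((S.card : ℝ))⁻¹ := fun x hx => if_pos hx
    rw [Finset.sum_congr rfl h, Finset.sum_const, nsmul_eq_mul,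
        mul_inv_cancel₀ (ne_of_gt hSpos)]
  have hPsum : ∑ x, P x = 1 := by
    rw [← hPS]
    symm
    apply Finset.sum_subset (Finset.subset_univ S)
    intro x _ hx
    simp [hP, hx]
  have hProb : IsProb P := by
    refine ⟨fun t => ?_, hPsum⟩
    by_cases h : t ∈ S <;> simp [hP, h] <;> positivity
  have hpow : (2:ℝ) ^ (-((n:ℝ) - Real.logb 2 (1/δ) - 1)) = 2 / (δ * 2 ^ n) := by
    have h2 : (0:ℝ) < 2 := two_pos
    have hd1 : (0:ℝ) < 1/δ := by positivity
    rw [show -((n:ℝ) - Real.logb 2 (1/δ) - 1) = Real.logb 2 (1/δ) + ((1:ℝ) - (n:ℝ)) by ring,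
        Real.rpow_add h2, Real.rpow_logb h2 (by norm_num) hd1,
        Real.rpow_sub h2, Real.rpow_one, Real.rpow_natCast]
    field_simp
  have hMin : MinEntropyGe P ((n:ℝ) - Real.logb 2 (1/δ) - 1) := by
    intro t
    rw [hpow]
    have hle : ((S.card : ℝ))⁻¹ ≤ 2 / (δ * 2 ^ n) := by
      have h0 : (0:ℝ) < δ * 2 ^ n / 2 := by positivity
      have := one_div_le_one_div_of_le h0 hc
      rw [one_div, one_div, inv_div] at this
      exact this
    by_cases h : t ∈ S
    · rw [hP]; simp only [if_pos h]; exact hle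
    · rw [hP]; simp only [if_neg h]; positivity
  have hstat := hE P hProb hMin
  set D := (Fintype.card (Fin d → Bool) : ℝ) with hDdef
  set M := (Fintype.card (Fin m → Bool) : ℝ) with hMdef
  have hD : (0:ℝ) < D := by rw [hDdef]; exact_mod_cast Fintype.card_pos
  have hM : (0:ℝ) < M := by rw [hMdef]; exact_mod_cast Fintype.card_pos
  set PQ : (Fin n → Bool) × (Fin d → Bool) → ℝ := fun q => P q.1 / D with hPQdef
  set Efun : (Fin n → Bool) × (Fin d → Bool) → Fin m → Bool := fun q => E q.1 q.2 with hEf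
  have hsplit : ∀ g : (Fin m → Bool) → ℝ,
      ∑ q : (Fin n → Bool) × (Fin d → Bool), PQ q * g (Efun q)
        = ∑ x, P x * expectation (fun s => g (E x s)) := by
    intro g
    rw [Fintype.sum_prod_type]
    apply Finset.sum_congr rfl
    intro x _
    simp only [hPQdef, hEf]
    rw [← Finset.mul_sum, expectation, div_mul_eq_mul_div, mul_div_assoc]
  have hWf : ∑ z, pushf PQ Efun z * f z = ∑ x, P x * expectation (fun s => f (E x s)) := by
    rw [sum_pushf_mul, hsplit]
  have hWsum : ∑ z, pushf PQ Efun z = 1 := by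
    have h1 : ∑ z, pushf PQ Efun z
        = ∑ z, pushf PQ Efun z * (fun _ : Fin m → Bool => (1:ℝ)) z := by simp
    rw [h1, sum_pushf_mul, hsplit (fun _ => 1)]
    have hED : expectation (fun _ : Fin d → Bool => (1:ℝ)) = 1 := by
      rw [expectation, Finset.sum_const, Finset.card_univ, nsmul_eq_mul, mul_one,
          div_self (ne_of_gt hD)]
    simp only [hED, mul_one]
    exact hPsum
  have hUsum : ∑ _z : Fin m → Bool, (1 / M) = 1 := by
    rw [Finset.sum_const, Finset.card_univ, nsmul_eq_mul, ← hMdef, mul_one_div,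
        div_self (ne_of_gt hM)]
  have hUf : ∑ z, (1 / M) * f z = expectation f := by
    rw [← Finset.mul_sum, expectation, one_div, inv_mul_eq_div]
  have habs := abs_sub_sum_le_statDist (pushf PQ Efun) (fun _ => 1 / M) f
      (by rw [hWsum, hUsum]) hf'
  have hlow : expectation f + ε < ∑ x, P x * expectation (fun s => f (E x s)) := by
    have hsub : ∑ x, P x * expectation (fun s => f (E x s))
        = ∑ x ∈ S, P x * expectation (fun s => f (E x s)) := by
      symm
      apply Finset.sum_subset (Finset.subset_univ S)
      intro x _ hx
      simp [hP, hx]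
    rw [hsub]
    calc expectation f + ε = ∑ x ∈ S, P x * (expectation f + ε) := by
          rw [← Finset.sum_mul, hPS, one_mul]
      _ < ∑ x ∈ S, P x * expectation (fun s => f (E x s)) := by
          apply Finset.sum_lt_sum_of_nonempty hSne
          intro x hx
          have hx' : ε < expectation (fun s => f (E x s)) - expectation f :=
            (Finset.mem_filter.mp hx).2
          have hPx : 0 < P x := by rw [hP]; simp only [if_pos hx]; positivity
          exact mul_lt_mul_of_pos_left (by linarith) hPx
  rw [hWf, hUf] at habs
  have hle : |∑ x, P x * expectation (fun s => f (E x s)) - expectation f| ≤ ε :=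
    le_trans habs hstat
  have := le_abs_self (∑ x, P x * expectation (fun s => f (E x s)) - expectation f)
  linarith

end Aux

/-- A `(k, ε)`-extractor with `k = n − log₂(1/δ) − 1` is an
`(ε, δ)`-averaging sampler: for every `f : {0,1}^m → [0,1]`, the fraction of
`x ∈ {0,1}^n` for which `|E_s[f(E(x,s))] − E_y[f y]| > ε` is less than `δ`. -/
theorem stmt_17 (n d m : ℕ) (hn : 1 ≤ n) (hd : 1 ≤ d) (hm : 1 ≤ m)
    (ε δ : ℝ) (hε : 0 < ε) (hδ0 : 0 < δ) (hδ1 : δ ≤ 1)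
    (E : (Fin n → Bool) → (Fin d → Bool) → (Fin m → Bool))
    (hE : IsExtractor ((n : ℝ) - Real.logb 2 (1 / δ) - 1) ε E) :
    ∀ f : (Fin m → Bool) → ℝ, (∀ y, f y ∈ Set.Icc (0 : ℝ) 1) →
      ((Finset.univ.filter fun x : Fin n → Bool =>
          ε < |expectation (fun s => f (E x s)) - expectation f|).card : ℝ)
        < δ * (Fintype.card (Fin n → Bool) : ℝ) := by
  intro f hf
  have hf' : ∀ y, 0 ≤ f y ∧ f y ≤ 1 := fun y => Set.mem_Icc.mp (hf y)
  have h1 := key_half n d m ε δ hε hδ0 E hE f hf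
  have h2 := key_half n d m ε δ hε hδ0 E hE (fun y => 1 - f y)
      (fun y => Set.mem_Icc.mpr ⟨show (0:ℝ) ≤ 1 - f y by linarith [(hf' y).2],
        show (1:ℝ) - f y ≤ 1 by linarith [(hf' y).1]⟩)
  have hset : (Finset.univ.filter fun x : Fin n → Bool =>
      ε < expectation (fun s => (fun y => (1:ℝ) - f y) (E x s))
          - expectation (fun y => (1:ℝ) - f y))
      = Finset.univ.filter fun x : Fin n → Bool =>
          ε < -(expectation (fun s => f (E x s)) - expectation f) := by
    apply Finset.filter_congr
    intro x _
    simp only []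
    rw [expectation_one_sub, expectation_one_sub]
    constructor <;> intro h <;> linarith
  rw [hset] at h2
  have hsubset : (Finset.univ.filter fun x : Fin n → Bool =>
      ε < |expectation (fun s => f (E x s)) - expectation f|)
      ⊆ (Finset.univ.filter fun x : Fin n → Bool =>
          ε < expectation (fun s => f (E x s)) - expectation f)
        ∪ (Finset.univ.filter fun x : Fin n → Bool =>
          ε < -(expectation (fun s => f (E x s)) - expectation f)) := by
    intro x hx
    simp only [Finset.mem_filter, Finset.mem_union, Finset.mem_univ, true_and] at *
    rcases lt_abs.mp hx with h | h
    · exact Or.inl h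
    · exact Or.inr h
  have hcard := le_trans (Finset.card_le_card hsubset) (Finset.card_union_le _ _)
  have hcard' : ((Finset.univ.filter fun x : Fin n → Bool =>
      ε < |expectation (fun s => f (E x s)) - expectation f|).card : ℝ)
      ≤ ((Finset.univ.filter fun x : Fin n → Bool =>
          ε < expectation (fun s => f (E x s)) - expectation f).card : ℝ)
        + ((Finset.univ.filter fun x : Fin n → Bool =>
          ε < -(expectation (fun s => f (E x s)) - expectation f)).card : ℝ) := by
    exact_mod_cast hcard
  linarith
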